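/- Let k ≥ 2 and m ≥ (432k)² be integers with m − k odd. Then the graph K^{k−2}_{2,(m−k−1)/2} * K₃ is minimally (k,k)-edge-connected. -/

import Mathlib

open SimpleGraph

/-- The `l`-edge-connectivity of a graph: the minimum number of edges whose removal
leaves a graph with at least `l` connected components, if the graph has at least `l`
vertices; otherwise the number of vertices. -/
noncomputable def edgeConnL {V : Type*} (l : ℕ) (G : SimpleGraph V) : ℕ :=
  if l ≤ Nat.card V then
    sInf {c : ℕ | ∃ F : Set (Sym2 V), F ⊆ G.edgeSet ∧ F.ncard = c ∧
      l ≤ Nat.card (G.deleteEdges F).ConnectedComponent}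
  else Nat.card V

/-- A graph is minimally `(k,l)`-edge-connected if it is connected, its
`l`-edge-connectivity is at least `k`, and deleting any edge drops the
`l`-edge-connectivity below `k`. -/
def IsMinimallyKLEdgeConnected {V : Type*} (k l : ℕ) (G : SimpleGraph V) : Prop :=
  G.Connected ∧ k ≤ edgeConnL l G ∧
    ∀ e ∈ G.edgeSet, edgeConnL l (G.deleteEdges {e}) < k

/-- The real adjacency matrix of a simple graph. -/
noncomputable def adjMat {V : Type*} (G : SimpleGraph V) : Matrix V V ℝ :=
  letI := Classical.decRel G.Adj
  G.adjMatrix ℝ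

/-- The spectral radius of a graph: the largest (real) eigenvalue of its adjacency matrix. -/
noncomputable def specRad {V : Type*} [Fintype V] [DecidableEq V]
    (G : SimpleGraph V) : ℝ :=
  sSup (spectrum ℝ (adjMat G))

abbrev KbookTriV (p s : ℕ) : Type := (Unit ⊕ Unit) ⊕ ((Fin s ⊕ Fin p) ⊕ Fin 2)

/-- `K^{p}_{2,s} * K₃`: the graph obtained from the disjoint union of the star `K_{1,p}`,
a triangle `K₃` and the complete bipartite graph `K_{2,s}` by identifying the centre of the
star, one vertex of the triangle and one of the two vertices of degree `s` of `K_{2,s}`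
into a single vertex.  Here `Sum.inl (Sum.inl _)` is the identified vertex,
`Sum.inl (Sum.inr _)` is the other vertex of the part of size two, `Fin s` is the part of
size `s`, `Fin p` are the pendant vertices and `Fin 2` are the other two triangle vertices. -/
def KbookTri (p s : ℕ) : SimpleGraph (KbookTriV p s) :=
  SimpleGraph.fromRel (fun a b =>
    match a, b with
    | Sum.inl (Sum.inl _), Sum.inr _ => True
    | Sum.inl (Sum.inr _), Sum.inr (Sum.inl (Sum.inl _)) => True
    | Sum.inr (Sum.inr _), Sum.inr (Sum.inr _) => True
    | _, _ => False)

/-!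
Deleting one edge raises the number of components by at most one. For `s ≥ 2` the only
bridges of `K^{p}_{2,s} * K₃` are its `p` pendant edges, so a set of at most `p + 1` edges
either consists of pendant edges or contains a non-bridge, whose deletion keeps the graph
connected; either way at most `p + 1` components remain. Conversely, every edge lies among the
pendant edges and the two edges at some vertex `z` of degree two (in the part of size `s` or on
the triangle); deleting these `p + 2` edges isolates `z` and the `p` pendant vertices, so after
deleting the given edge, `p + 1` more deletions leave `p + 2` components.
-/

namespace SimpleGraph

variable {V : Type*} {G : SimpleGraph V}

lemma Reachable.exists_adj_of_ne {u v : V} (h : G.Reachable u v) (hne : u ≠ v) :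
    ∃ w, G.Adj u w := by
  obtain ⟨_ | ⟨hadj, _⟩⟩ := h
  exacts [absurd rfl hne, ⟨_, hadj⟩]

lemma ncard_lt_card_connectedComponent_of_isolated [Finite V] {S : Set V}
    (hS : ∀ v ∈ S, ∀ w, ¬G.Adj v w) {u : V} (hu : u ∉ S) :
    S.ncard < Nat.card G.ConnectedComponent := by
  have hinj : Set.InjOn G.connectedComponentMk (insert u S) := by
    intro a ha b hb hab
    by_contra hne
    have hr := ConnectedComponent.exact hab
    rcases ha with rfl | ha
    · rcases hb with rfl | hb
      · exact hne rfl
      · obtain ⟨w, hw⟩ := hr.symm.exists_adj_of_ne (Ne.symm hne)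
        exact hS b hb w hw
    · obtain ⟨w, hw⟩ := hr.exists_adj_of_ne hne
      exact hS a ha w hw
  calc S.ncard < (insert u S).ncard := by rw [Set.ncard_insert_of_notMem hu]; omega
    _ = (G.connectedComponentMk '' insert u S).ncard := hinj.ncard_image.symm
    _ ≤ Nat.card G.ConnectedComponent := Set.ncard_le_card _

lemma card_connectedComponent_bot [Finite V] :
    Nat.card (⊥ : SimpleGraph V).ConnectedComponent = Nat.card V := by
  refine (Nat.card_congr (Equiv.ofBijective (⊥ : SimpleGraph V).connectedComponentMk
    ⟨fun u v h => reachable_bot.mp (ConnectedComponent.exact h), fun C => ?_⟩)).symm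
  induction C using ConnectedComponent.ind with | h v => exact ⟨v, rfl⟩

lemma card_connectedComponent_deleteEdges_singleton_le [Finite V] (e : Sym2 V) :
    Nat.card (G.deleteEdges {e}).ConnectedComponent ≤ Nat.card G.ConnectedComponent + 1 := by
  classical
  induction e with | h u v => ?_
  have hreach : ∀ a b, G.Reachable a b → (G.deleteEdges {s(u, v)}).Reachable a b ∨
      (G.deleteEdges {s(u, v)}).Reachable a u ∨ (G.deleteEdges {s(u, v)}).Reachable a v := by
    rintro a b ⟨w⟩
    induction w with
    | nil => exact Or.inl .rfl
    | @cons a a' b hadj _ ih =>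
      by_cases he : s(a, a') = s(u, v)
      · rcases Sym2.eq_iff.mp he with ⟨rfl, -⟩ | ⟨rfl, -⟩
        exacts [Or.inr (Or.inl .rfl), Or.inr (Or.inr .rfl)]
      · have h' : (G.deleteEdges {s(u, v)}).Adj a a' := by simp [hadj, he]
        exact ih.imp h'.reachable.trans (Or.imp h'.reachable.trans h'.reachable.trans)
  -- With `v` representing its own component, every vertex reaches its representative or `u`.
  let rep : G.ConnectedComponent → V := fun C =>
    if C = G.connectedComponentMk v then v else C.out
  have hrep : ∀ a, G.Reachable a (rep (G.connectedComponentMk a)) := by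
    intro a
    unfold rep
    split_ifs with h
    · exact ConnectedComponent.exact h
    · exact (ConnectedComponent.exact (Quot.out_eq (G.connectedComponentMk a))).symm
  let f : Option G.ConnectedComponent → (G.deleteEdges {s(u, v)}).ConnectedComponent :=
    fun o => (G.deleteEdges {s(u, v)}).connectedComponentMk (o.elim u rep)
  have hf : Function.Surjective f := by
    intro C
    induction C using ConnectedComponent.ind with | h a => ?_
    rcases hreach a _ (hrep a) with h | h | h
    · exact ⟨some _, (ConnectedComponent.sound h).symm⟩
    · exact ⟨none, (ConnectedComponent.sound h).symm⟩
    · refine ⟨some (G.connectedComponentMk a), (ConnectedComponent.sound ?_).symm⟩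
      have : G.connectedComponentMk a = G.connectedComponentMk v :=
        ConnectedComponent.sound (h.mono (deleteEdges_le _))
      simpa [rep, this] using h
  simpa using Nat.card_le_card_of_surjective f hf

lemma card_connectedComponent_deleteEdges_le [Finite V] (F : Set (Sym2 V)) :
    Nat.card (G.deleteEdges F).ConnectedComponent ≤ Nat.card G.ConnectedComponent + F.ncard := by
  classical
  obtain ⟨F, rfl⟩ := (Set.toFinite F).exists_finset_coe
  rw [Set.ncard_coe_finset]
  induction F using Finset.induction_on with
  | empty => simp
  | insert e F he ih =>
    rw [Finset.coe_insert, Set.insert_eq, Set.union_comm, ← deleteEdges_deleteEdges,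
      Finset.card_insert_of_notMem he]
    grw [card_connectedComponent_deleteEdges_singleton_le, ih]
    omega

lemma Connected.card_connectedComponent_deleteEdges_le_of_not_isBridge [Finite V]
    (hG : G.Connected) {F : Set (Sym2 V)} {e : Sym2 V} (heF : e ∈ F) (he : ¬G.IsBridge e) :
    Nat.card (G.deleteEdges F).ConnectedComponent ≤ F.ncard := by
  induction e with | h u v => ?_
  have hsplit : G.deleteEdges F = (G.deleteEdges {s(u, v)}).deleteEdges (F \ {s(u, v)}) := by
    rw [deleteEdges_deleteEdges, Set.union_sdiff_cancel (Set.singleton_subset_iff.mpr heF)]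
  have hconn := (hG.connected_delete_edge_of_not_isBridge he).preconnected
  have h1 : Nat.card (G.deleteEdges {s(u, v)}).ConnectedComponent ≤ 1 :=
    Finite.card_le_one_iff_subsingleton.mpr hconn.subsingleton_connectedComponent
  rw [hsplit, ← Set.ncard_sdiff_singleton_add_one heF]
  grw [SimpleGraph.card_connectedComponent_deleteEdges_le, h1]
  omega

end SimpleGraph

section edgeConnL

variable {V : Type*} {G : SimpleGraph V} {k l : ℕ}

lemma le_edgeConnL [Finite V] (hl : l ≤ Nat.card V)
    (h : ∀ F ⊆ G.edgeSet, F.ncard < k → Nat.card (G.deleteEdges F).ConnectedComponent < l) :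
    k ≤ edgeConnL l G := by
  rw [edgeConnL, if_pos hl]
  apply le_csInf
  · refine ⟨G.edgeSet.ncard, G.edgeSet, subset_rfl, rfl, ?_⟩
    rwa [deleteEdges_edgeSet, sdiff_self, card_connectedComponent_bot]
  · rintro _ ⟨F, hFE, rfl, hF⟩
    by_contra! hlt
    exact (h F hFE hlt).not_ge hF

lemma edgeConnL_lt (hl : l ≤ Nat.card V) {F : Set (Sym2 V)} (hFE : F ⊆ G.edgeSet)
    (hF : F.ncard < k) (hc : l ≤ Nat.card (G.deleteEdges F).ConnectedComponent) :
    edgeConnL l G < k := by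
  rw [edgeConnL, if_pos hl]
  refine (Nat.sInf_le ?_).trans_lt hF
  exact ⟨F, hFE, rfl, hc⟩

lemma edgeConnL_deleteEdges_singleton_lt [Finite V] (hl : l ≤ Nat.card V) {D : Set (Sym2 V)}
    (hDE : D ⊆ G.edgeSet) {e : Sym2 V} (he : e ∈ D) (hD : D.ncard ≤ k)
    (hc : l ≤ Nat.card (G.deleteEdges D).ConnectedComponent) :
    edgeConnL l (G.deleteEdges {e}) < k := by
  refine edgeConnL_lt hl (F := D \ {e}) ?_ ?_ ?_
  · rw [edgeSet_deleteEdges]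
    exact Set.sdiff_subset_sdiff_left hDE
  · have := Set.ncard_sdiff_singleton_add_one he
    omega
  · rwa [deleteEdges_deleteEdges, Set.union_sdiff_cancel (Set.singleton_subset_iff.mpr he)]

end edgeConnL

namespace KbookTri

variable {p s : ℕ}

def hub : KbookTriV p s := .inl (.inl ())
def apex : KbookTriV p s := .inl (.inr ())
def page (i : Fin s) : KbookTriV p s := .inr (.inl (.inl i))
def leaf (j : Fin p) : KbookTriV p s := .inr (.inl (.inr j))
def tri (r : Fin 2) : KbookTriV p s := .inr (.inr r)

def leafEdges : Set (Sym2 (KbookTriV p s)) := Set.range fun j => s(hub, leaf j)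

attribute [local simp] KbookTri hub apex page leaf tri

lemma vertex_cases (v : KbookTriV p s) :
    v = hub ∨ v = apex ∨ (∃ i, v = page i) ∨ (∃ j, v = leaf j) ∨ ∃ r, v = tri r := by
  rcases v with (⟨⟩ | ⟨⟩) | ((i | j) | r)
  exacts [Or.inl rfl, Or.inr (Or.inl rfl), Or.inr (Or.inr (Or.inl ⟨i, rfl⟩)),
    Or.inr (Or.inr (Or.inr (Or.inl ⟨j, rfl⟩))), Or.inr (Or.inr (Or.inr (Or.inr ⟨r, rfl⟩)))]

lemma edge_cases {e : Sym2 (KbookTriV p s)} (he : e ∈ (KbookTri p s).edgeSet) :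
    e ∈ leafEdges ∨ (∃ i, e = s(hub, page i)) ∨ (∃ i, e = s(apex, page i)) ∨
      (∃ r, e = s(hub, tri r)) ∨ e = s(tri 0, tri 1) := by
  induction e with | h u v => ?_
  rcases vertex_cases u with rfl | rfl | ⟨i, rfl⟩ | ⟨j, rfl⟩ | ⟨r, rfl⟩ <;>
  rcases vertex_cases v with rfl | rfl | ⟨i', rfl⟩ | ⟨j', rfl⟩ | ⟨r', rfl⟩ <;>
  simp_all [leafEdges, Sym2.eq_swap]
  omega

lemma leafEdges_subset_edgeSet :
    (leafEdges : Set (Sym2 (KbookTriV p s))) ⊆ (KbookTri p s).edgeSet := by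
  rintro _ ⟨j, rfl⟩
  simp

lemma ncard_leafEdges : (leafEdges : Set (Sym2 (KbookTriV p s))).ncard = p := by
  rw [leafEdges, Set.ncard_range_of_injective (fun j j' h => by simpa using h), Nat.card_fin]

lemma reachable_hub (hs : 0 < s) (v : KbookTriV p s) : (KbookTri p s).Reachable v hub := by
  rcases vertex_cases v with rfl | rfl | ⟨i, rfl⟩ | ⟨j, rfl⟩ | ⟨r, rfl⟩
  · rfl
  · have h1 : (KbookTri p s).Adj apex (page ⟨0, hs⟩) := by simp
    have h2 : (KbookTri p s).Adj (page ⟨0, hs⟩) hub := by simp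
    exact h1.reachable.trans h2.reachable
  all_goals exact Adj.reachable (by simp)

lemma connected (hs : 0 < s) : (KbookTri p s).Connected :=
  (connected_iff_exists_forall_reachable _).mpr ⟨hub, fun v => (reachable_hub hs v).symm⟩

lemma not_isBridge (hs : 2 ≤ s) {e : Sym2 (KbookTriV p s)} (he : e ∈ (KbookTri p s).edgeSet)
    (hl : e ∉ leafEdges) : ¬(KbookTri p s).IsBridge e := by
  have : Nontrivial (Fin s) := Fin.nontrivial_iff_two_le.mpr hs
  rcases edge_cases he with h | ⟨i, rfl⟩ | ⟨i, rfl⟩ | ⟨r, rfl⟩ | rfl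
  · exact absurd h hl
  · obtain ⟨i', hi'⟩ := exists_ne i
    set H := (KbookTri p s).deleteEdges {s(hub, page i)}
    have h1 : H.Adj hub (page i') := by simp [H, hi']
    have h2 : H.Adj (page i') apex := by simp [H]
    have h3 : H.Adj apex (page i) := by simp [H]
    exact not_not.mpr ((h1.reachable.trans h2.reachable).trans h3.reachable)
  · obtain ⟨i', hi'⟩ := exists_ne i
    set H := (KbookTri p s).deleteEdges {s(apex, page i)}
    have h1 : H.Adj apex (page i') := by simp [H, hi']
    have h2 : H.Adj (page i') hub := by simp [H]
    have h3 : H.Adj hub (page i) := by simp [H]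
    exact not_not.mpr ((h1.reachable.trans h2.reachable).trans h3.reachable)
  · -- in `Fin 2`, `r + 1` is the index of the other triangle vertex
    set H := (KbookTri p s).deleteEdges {s(hub, tri r)}
    have h1 : H.Adj hub (tri (r + 1)) := by simp [H]
    have h2 : H.Adj (tri (r + 1)) (tri r) := by simp [H]
    exact not_not.mpr (h1.reachable.trans h2.reachable)
  · set H := (KbookTri p s).deleteEdges {s(tri 0, tri 1)}
    have h1 : H.Adj (tri 0) hub := by simp [H]
    have h2 : H.Adj hub (tri 1) := by simp [H]
    exact not_not.mpr (h1.reachable.trans h2.reachable)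

lemma card_connectedComponent_deleteEdges_le (hs : 2 ≤ s) {F : Set (Sym2 (KbookTriV p s))}
    (hFE : F ⊆ (KbookTri p s).edgeSet) (hF : F.ncard ≤ p + 1) :
    Nat.card ((KbookTri p s).deleteEdges F).ConnectedComponent ≤ p + 1 := by
  by_cases hFl : F ⊆ leafEdges
  · have h1 : Nat.card (KbookTri p s).ConnectedComponent ≤ 1 :=
      Finite.card_le_one_iff_subsingleton.mpr
        (connected (by omega)).preconnected.subsingleton_connectedComponent
    have h2 : F.ncard ≤ p := (Set.ncard_le_ncard hFl).trans ncard_leafEdges.le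
    grw [SimpleGraph.card_connectedComponent_deleteEdges_le, h1, h2]
    omega
  · obtain ⟨e, heF, hel⟩ := Set.not_subset.mp hFl
    exact ((connected (by omega)).card_connectedComponent_deleteEdges_le_of_not_isBridge heF
      (not_isBridge hs (hFE heF) hel)).trans hF

def degreeTwoVertices : Set (KbookTriV p s) := Set.range page ∪ Set.range tri

lemma ncard_incidenceSet_le_two {z : KbookTriV p s} (hz : z ∈ degreeTwoVertices) :
    ((KbookTri p s).incidenceSet z).ncard ≤ 2 := by
  obtain ⟨a, b, hab⟩ : ∃ a b, (KbookTri p s).neighborSet z ⊆ {a, b} := by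
    rcases hz with ⟨i, rfl⟩ | ⟨r, rfl⟩
    · refine ⟨hub, apex, fun w hw => ?_⟩
      rcases vertex_cases w with rfl | rfl | ⟨i, rfl⟩ | ⟨j, rfl⟩ | ⟨r, rfl⟩ <;> simp_all
    · refine ⟨hub, tri (r + 1), fun w hw => ?_⟩
      rcases vertex_cases w with rfl | rfl | ⟨i, rfl⟩ | ⟨j, rfl⟩ | ⟨r', rfl⟩ <;>
        simp_all
      omega
  calc ((KbookTri p s).incidenceSet z).ncard
      = ((KbookTri p s).neighborSet z).ncard :=
        Nat.card_congr ((KbookTri p s).incidenceSetEquivNeighborSet z)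
    _ ≤ ({a, b} : Set (KbookTriV p s)).ncard := Set.ncard_le_ncard hab
    _ ≤ 2 := (Set.ncard_insert_le _ _).trans (by rw [Set.ncard_singleton])

lemma le_card_connectedComponent_deleteEdges {z : KbookTriV p s}
    (hz : z ∈ degreeTwoVertices) :
    p + 2 ≤ Nat.card ((KbookTri p s).deleteEdges
      (leafEdges ∪ (KbookTri p s).incidenceSet z)).ConnectedComponent := by
  have hzl : z ∉ Set.range leaf := by
    rcases hz with ⟨i, rfl⟩ | ⟨r, rfl⟩ <;> simp
  have hhub : hub ∉ insert z (Set.range leaf) := by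
    rcases hz with ⟨i, rfl⟩ | ⟨r, rfl⟩ <;> simp
  have hiso : ∀ v ∈ insert z (Set.range leaf), ∀ w,
      ¬((KbookTri p s).deleteEdges (leafEdges ∪ (KbookTri p s).incidenceSet z)).Adj v w := by
    rintro v (rfl | ⟨j, rfl⟩) w hvw
    · rw [deleteEdges_adj] at hvw
      exact hvw.2 (Or.inr ⟨hvw.1, Sym2.mem_mk_left _ _⟩)
    · rw [deleteEdges_adj] at hvw
      rcases vertex_cases w with rfl | rfl | ⟨i, rfl⟩ | ⟨j, rfl⟩ | ⟨r, rfl⟩ <;>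
        simp_all [leafEdges]
  have := ncard_lt_card_connectedComponent_of_isolated hiso hhub
  rwa [Set.ncard_insert_of_notMem hzl,
    Set.ncard_range_of_injective (fun j j' h => by simpa using h), Nat.card_fin] at this

lemma exists_degreeTwoVertex_of_mem_edgeSet {e : Sym2 (KbookTriV p s)}
    (he : e ∈ (KbookTri p s).edgeSet) :
    ∃ z ∈ degreeTwoVertices, e ∈ leafEdges ∪ (KbookTri p s).incidenceSet z := by
  rcases edge_cases he with h | ⟨i, rfl⟩ | ⟨i, rfl⟩ | ⟨r, rfl⟩ | rfl
  · exact ⟨tri 0, Or.inr ⟨0, rfl⟩, Or.inl h⟩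
  · exact ⟨page i, Or.inl ⟨i, rfl⟩, Or.inr ⟨he, Sym2.mem_mk_right _ _⟩⟩
  · exact ⟨page i, Or.inl ⟨i, rfl⟩, Or.inr ⟨he, Sym2.mem_mk_right _ _⟩⟩
  · exact ⟨tri r, Or.inr ⟨r, rfl⟩, Or.inr ⟨he, Sym2.mem_mk_right _ _⟩⟩
  · exact ⟨tri 0, Or.inr ⟨0, rfl⟩, Or.inr ⟨he, Sym2.mem_mk_left _ _⟩⟩

lemma card_vertices : Nat.card (KbookTriV p s) = s + p + 4 := by
  simp [Nat.card_eq_fintype_card]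
  omega

theorem isMinimallyKLEdgeConnected (hs : 2 ≤ s) :
    IsMinimallyKLEdgeConnected (p + 2) (p + 2) (KbookTri p s) := by
  have hl : p + 2 ≤ Nat.card (KbookTriV p s) := by rw [card_vertices]; omega
  refine ⟨connected (by omega), le_edgeConnL hl fun F hFE hF => ?_, fun e he => ?_⟩
  · exact Nat.lt_succ_of_le (card_connectedComponent_deleteEdges_le hs hFE (by omega))
  · obtain ⟨z, hz, heD⟩ := exists_degreeTwoVertex_of_mem_edgeSet he
    refine edgeConnL_deleteEdges_singleton_lt hl
      (Set.union_subset leafEdges_subset_edgeSet (incidenceSet_subset _ _)) heD ?_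
      (le_card_connectedComponent_deleteEdges hz)
    grw [Set.ncard_union_le, ncard_leafEdges, ncard_incidenceSet_le_two hz]

end KbookTri

theorem KbookTri_isMinimallyKKEdgeConnected_general (k m : ℕ) (hk : 2 ≤ k)
    (hm : (432 * k) ^ 2 ≤ m) :
    IsMinimallyKLEdgeConnected k k (KbookTri (k - 2) ((m - k - 1) / 2)) := by
  obtain ⟨p, rfl⟩ : ∃ p, k = p + 2 := ⟨k - 2, by omega⟩
  have hs : 2 ≤ (m - (p + 2) - 1) / 2 := by
    have : p + 7 ≤ (432 * (p + 2)) ^ 2 := by nlinarith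
    omega
  rw [Nat.add_sub_cancel]
  exact KbookTri.isMinimallyKLEdgeConnected hs

/-- Let `k ≥ 2` and `m ≥ (432k)²` with `m − k` odd.  Then the graph
`K^{k−2}_{2,(m−k−1)/2} * K₃` is minimally `(k,k)`-edge-connected. -/
theorem KbookTri_isMinimallyKKEdgeConnected (k m : ℕ) (hk : 2 ≤ k)
    (hm : (432 * k) ^ 2 ≤ m) (hpar : (m - k) % 2 = 1) :
    IsMinimallyKLEdgeConnected k k (KbookTri (k - 2) ((m - k - 1) / 2)) :=
  KbookTri_isMinimallyKKEdgeConnected_general k m hk hm
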